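/- Combining the previous two facts: if U − (X,S) − Y is a Markov chain, then I(U;Y) − I(U;S) ≤ I(X;Y|S). Hence the Costa game utility is upper bounded by the Side Information game utility for every pair of user and jammer strategies. -/

import Mathlib

open MeasureTheory ProbabilityTheory

variable {Ω : Type*} [MeasureSpace Ω]

/-- Shannon entropy of a finitely-valued random variable. -/
noncomputable def shEnt {α : Type*} [MeasurableSpace α] [Fintype α] (X : Ω → α) : ℝ :=
  ∑ x : α, Real.negMulLog ((Measure.map X ℙ {x}).toReal)

/-- Mutual information `I(X;Y) = H(X) + H(Y) - H(X,Y)` of finitely-valued random variables. -/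
noncomputable def shMutualInfo {α β : Type*} [MeasurableSpace α] [Fintype α]
    [MeasurableSpace β] [Fintype β] (X : Ω → α) (Y : Ω → β) : ℝ :=
  shEnt X + shEnt Y - shEnt (fun ω => (X ω, Y ω))

/-- Conditional mutual information
`I(X;Y|S) = H(X,S) + H(Y,S) - H(S) - H(X,Y,S)` of finitely-valued random variables. -/
noncomputable def shCondMutualInfo {α β γ : Type*} [MeasurableSpace α] [Fintype α]
    [MeasurableSpace β] [Fintype β] [MeasurableSpace γ] [Fintype γ]
    (X : Ω → α) (Y : Ω → β) (S : Ω → γ) : ℝ :=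
  shEnt (fun ω => (X ω, S ω)) + shEnt (fun ω => (Y ω, S ω)) - shEnt S
    - shEnt (fun ω => (X ω, Y ω, S ω))

/-!
The left side equals `I(X;Y|S)` minus `I(U;S|Y) + I(X;Y|U,S)` plus `I(U;Y|X,S)`, as an identity
between entropies (after relabelling tuples). The first two conditional mutual informations are
nonnegative and the last vanishes by the Markov property. Conditioning on `C = c` slices
`I(A;B|C)` into mutual informations of the unnormalised masses `P(A = a, B = b, C = c)`; each of
these is nonnegative by the pointwise bound `log x ≥ 1 - 1/x`, which is an equality when the slice
factorises.
-/

open Real Finset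

lemma sub_le_mul_sub_log {t u : ℝ} (ht : 0 ≤ t) (hu : 0 < u) : t - u ≤ t * (log t - log u) := by
  rcases ht.eq_or_lt with rfl | ht
  · simpa using hu.le
  have h := one_sub_inv_le_log_of_pos (div_pos ht hu)
  rw [log_div ht.ne' hu.ne', inv_div] at h
  calc t - u = t * (1 - u / t) := by field_simp
    _ ≤ t * (log t - log u) := mul_le_mul_of_nonneg_left h ht.le

lemma sub_mul_div_le_mul_log {m r c T : ℝ} (hm : 0 ≤ m) (hr : m ≤ r) (hc : m ≤ c) (hT : m ≤ T) :
    m - r * c / T ≤ m * (log m + log T - log r - log c) := by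
  rcases hm.eq_or_lt with rfl | hm
  · rw [zero_mul, zero_sub, neg_nonpos]
    exact div_nonneg (mul_nonneg hr hc) hT
  have hr := hm.trans_le hr
  have hc := hm.trans_le hc
  have hT := hm.trans_le hT
  have hlog : log (r * c / T) = log r + log c - log T := by
    rw [log_div (by positivity) hT.ne', log_mul hr.ne' hc.ne']
  have hgibbs := sub_le_mul_sub_log hm.le (by positivity : 0 < r * c / T)
  rw [hlog] at hgibbs
  linarith

section MassMutualInfo

variable {A B : Type*} [Fintype A] [Fintype B]

/-- For unnormalised `M`, this is `∑ M` times the mutual information of `M / ∑ M`. -/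
noncomputable def massMutualInfo (M : A → B → ℝ) : ℝ :=
  ∑ a, negMulLog (∑ b, M a b) + ∑ b, negMulLog (∑ a, M a b)
    - negMulLog (∑ a, ∑ b, M a b) - ∑ a, ∑ b, negMulLog (M a b)

lemma massMutualInfo_eq_sum (M : A → B → ℝ) :
    massMutualInfo M = ∑ a, ∑ b, M a b * (log (M a b) + log (∑ a', ∑ b', M a' b')
      - log (∑ b', M a b') - log (∑ a', M a' b)) := by
  have hcol : ∑ b, negMulLog (∑ a, M a b) = ∑ a, ∑ b, -(M a b * log (∑ a', M a' b)) := by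
    rw [sum_comm]
    simp only [negMulLog, neg_mul, sum_mul, sum_neg_distrib]
  rw [massMutualInfo, hcol]
  simp only [negMulLog, neg_mul, sum_mul, sum_neg_distrib, mul_add, mul_sub, sum_add_distrib,
    sum_sub_distrib]
  ring

variable {M : A → B → ℝ}

lemma le_sum_sum_of_nonneg (hM : ∀ a b, 0 ≤ M a b) (a : A) (b : B) :
    M a b ≤ ∑ a', ∑ b', M a' b' :=
  (single_le_sum (fun b' _ ↦ hM a b') (mem_univ b)).trans
    (single_le_sum (fun a' _ ↦ sum_nonneg fun b' _ ↦ hM a' b') (mem_univ a))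

lemma massMutualInfo_nonneg (hM : ∀ a b, 0 ≤ M a b) : 0 ≤ massMutualInfo M := by
  set T := ∑ a, ∑ b, M a b
  -- the termwise lower bounds sum to `T - T * T / T = 0`, also when `T = 0`
  have hsum : ∑ a, ∑ b, (M a b - (∑ b', M a b') * (∑ a', M a' b) / T) = 0 := by
    simp only [sum_sub_distrib, ← sum_div, ← mul_sum, ← sum_mul]
    rw [sum_comm (f := fun b a ↦ M a b), mul_self_div_self, sub_self]
  rw [massMutualInfo_eq_sum, ← hsum]
  refine sum_le_sum fun a _ ↦ sum_le_sum fun b _ ↦ sub_mul_div_le_mul_log (hM a b)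
    (single_le_sum (fun b' _ ↦ hM a b') (mem_univ b))
    (single_le_sum (fun a' _ ↦ hM a' b) (mem_univ a)) (le_sum_sum_of_nonneg hM a b)

lemma massMutualInfo_eq_zero (hM : ∀ a b, 0 ≤ M a b)
    (hindep : ∀ a b, M a b * (∑ a', ∑ b', M a' b') = (∑ b', M a b') * (∑ a', M a' b)) :
    massMutualInfo M = 0 := by
  rw [massMutualInfo_eq_sum]
  refine sum_eq_zero fun a _ ↦ sum_eq_zero fun b _ ↦ ?_
  rcases (hM a b).eq_or_lt with h0 | hpos
  · rw [← h0, zero_mul]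
  have hT := hpos.trans_le (le_sum_sum_of_nonneg hM a b)
  have hprod := hindep a b
  obtain ⟨hr, hc⟩ := mul_ne_zero_iff.mp (hprod ▸ by positivity :
    (∑ b', M a b') * (∑ a', M a' b) ≠ 0)
  have hlog := congrArg log hprod
  rw [log_mul hpos.ne' hT.ne', log_mul hr hc] at hlog
  rw [hlog]
  ring

end MassMutualInfo

lemma measure_eq_sum_measure_preimage_singleton_inter {α β : Type*} [MeasurableSpace α]
    [MeasurableSpace β] [Fintype β] [MeasurableSingletonClass β] (μ : Measure α)
    {f : α → β} (hf : Measurable f) (s : Set α) :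
    μ s = ∑ b, μ (f ⁻¹' {b} ∩ s) :=
  calc μ s = μ.restrict s (f ⁻¹' ↑(univ : Finset β)) := by simp
    _ = ∑ b, μ.restrict s (f ⁻¹' {b}) :=
      (sum_measure_preimage_singleton _ fun b _ ↦ hf (measurableSet_singleton b)).symm
    _ = ∑ b, μ (f ⁻¹' {b} ∩ s) :=
      sum_congr rfl fun b _ ↦ Measure.restrict_apply (hf (measurableSet_singleton b))

section Entropy

variable {α β γ δ : Type*}

lemma shEnt_eq_sum [MeasurableSpace α] [Fintype α] [MeasurableSingletonClass α]
    {X : Ω → α} (hX : Measurable X) :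
    shEnt X = ∑ x, negMulLog (ℙ (X ⁻¹' {x})).toReal := by
  simp only [shEnt, Measure.map_apply hX (measurableSet_singleton _)]

lemma shEnt_comp_of_injective [MeasurableSpace α] [Fintype α] [MeasurableSingletonClass α]
    [MeasurableSpace δ] [Fintype δ] [MeasurableSingletonClass δ]
    {X : Ω → α} (hX : Measurable X) {f : α → δ} (hf : Function.Injective f) :
    shEnt (fun ω ↦ f (X ω)) = shEnt X := by
  rw [shEnt_eq_sum hX, shEnt_eq_sum (X := fun ω ↦ f (X ω)) ((measurable_of_finite f).comp hX)]
  refine (Fintype.sum_of_injective f hf _ _ (fun d hd ↦ ?_) fun x ↦ ?_).symm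
  · have : (fun ω ↦ f (X ω)) ⁻¹' {d} = ∅ :=
      Set.eq_empty_of_forall_notMem fun ω h ↦ hd ⟨X ω, h⟩
    rw [this, measure_empty, ENNReal.toReal_zero, negMulLog_zero]
  · congr 3
    ext ω
    simp [hf.eq_iff]

variable [IsFiniteMeasure (ℙ : Measure Ω)] {A : Ω → α} {B : Ω → β} {C : Ω → γ}

lemma measure_toReal_setOf_eq_sum [MeasurableSpace β] [Fintype β] [MeasurableSingletonClass β]
    (hB : Measurable B) (P : Ω → Prop) :
    (ℙ {ω | P ω}).toReal = ∑ b, (ℙ {ω | B ω = b ∧ P ω}).toReal := by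
  rw [measure_eq_sum_measure_preimage_singleton_inter ℙ hB,
    ENNReal.toReal_sum fun _ _ ↦ measure_ne_top _ _]
  rfl

lemma measure_toReal_marginal_left [MeasurableSpace β] [Fintype β] [MeasurableSingletonClass β]
    (hB : Measurable B) (a : α) (c : γ) :
    (ℙ {ω | A ω = a ∧ C ω = c}).toReal
      = ∑ b, (ℙ {ω | A ω = a ∧ B ω = b ∧ C ω = c}).toReal := by
  rw [measure_toReal_setOf_eq_sum hB]
  simp only [and_left_comm (a := B _ = _)]

lemma measure_toReal_marginal_right [MeasurableSpace α] [Fintype α] [MeasurableSingletonClass α]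
    (hA : Measurable A) (b : β) (c : γ) :
    (ℙ {ω | B ω = b ∧ C ω = c}).toReal
      = ∑ a, (ℙ {ω | A ω = a ∧ B ω = b ∧ C ω = c}).toReal :=
  measure_toReal_setOf_eq_sum hA _

lemma measure_toReal_marginal [MeasurableSpace α] [Fintype α] [MeasurableSingletonClass α]
    [MeasurableSpace β] [Fintype β] [MeasurableSingletonClass β]
    (hA : Measurable A) (hB : Measurable B) (c : γ) :
    (ℙ {ω | C ω = c}).toReal
      = ∑ a, ∑ b, (ℙ {ω | A ω = a ∧ B ω = b ∧ C ω = c}).toReal := by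
  rw [measure_toReal_setOf_eq_sum hA]
  simp only [measure_toReal_marginal_left hB]

variable [MeasurableSpace α] [Fintype α] [MeasurableSingletonClass α]
  [MeasurableSpace β] [Fintype β] [MeasurableSingletonClass β]
  [MeasurableSpace γ] [Fintype γ] [MeasurableSingletonClass γ]

lemma shCondMutualInfo_eq_sum_massMutualInfo (hA : Measurable A) (hB : Measurable B)
    (hC : Measurable C) :
    shCondMutualInfo A B C
      = ∑ c, massMutualInfo fun a b ↦ (ℙ {ω | A ω = a ∧ B ω = b ∧ C ω = c}).toReal := by
  simp only [shCondMutualInfo, massMutualInfo, shEnt_eq_sum hC, shEnt_eq_sum (hA.prodMk hC),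
    shEnt_eq_sum (hB.prodMk hC), shEnt_eq_sum (hA.prodMk (hB.prodMk hC)), Fintype.sum_prod_type,
    Set.preimage, Set.mem_singleton_iff, Prod.mk.injEq]
  simp only [measure_toReal_marginal_left (A := A) hB, measure_toReal_marginal_right (B := B) hA,
    measure_toReal_marginal hA hB, sum_add_distrib, sum_sub_distrib]
  congr 3
  · exact sum_comm
  · exact sum_comm
  · exact (sum_congr rfl fun _ _ ↦ sum_comm).trans sum_comm

lemma shCondMutualInfo_nonneg (hA : Measurable A) (hB : Measurable B) (hC : Measurable C) :
    0 ≤ shCondMutualInfo A B C := by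
  rw [shCondMutualInfo_eq_sum_massMutualInfo hA hB hC]
  exact sum_nonneg fun c _ ↦ massMutualInfo_nonneg fun _ _ ↦ ENNReal.toReal_nonneg

lemma shCondMutualInfo_eq_zero_of_condIndep (hA : Measurable A) (hB : Measurable B)
    (hC : Measurable C)
    (hindep : ∀ a b c, (ℙ {ω | A ω = a ∧ B ω = b ∧ C ω = c}).toReal * (ℙ {ω | C ω = c}).toReal
      = (ℙ {ω | A ω = a ∧ C ω = c}).toReal * (ℙ {ω | B ω = b ∧ C ω = c}).toReal) :
    shCondMutualInfo A B C = 0 := by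
  rw [shCondMutualInfo_eq_sum_massMutualInfo hA hB hC]
  refine sum_eq_zero fun c _ ↦ massMutualInfo_eq_zero (fun _ _ ↦ ENNReal.toReal_nonneg)
    fun a b ↦ ?_
  rw [← measure_toReal_marginal hA hB, ← measure_toReal_marginal_left hB,
    ← measure_toReal_marginal_right hA]
  exact hindep a b c

end Entropy

theorem costa_utility_le_si_utility
    [IsProbabilityMeasure (ℙ : Measure Ω)]
    {α β γ χ : Type*} [MeasurableSpace α] [Fintype α] [MeasurableSingletonClass α]
    [MeasurableSpace β] [Fintype β] [MeasurableSingletonClass β]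
    [MeasurableSpace γ] [Fintype γ] [MeasurableSingletonClass γ]
    [MeasurableSpace χ] [Fintype χ] [MeasurableSingletonClass χ]
    (U : Ω → α) (X : Ω → χ) (S : Ω → γ) (Y : Ω → β)
    (hU : Measurable U) (hX : Measurable X) (hS : Measurable S) (hY : Measurable Y)
    -- Markov chain `U - (X,S) - Y`: conditional independence of `U` and `Y` given `(X,S)`.
    (hMarkov : ∀ (u : α) (x : χ) (s : γ) (y : β),
      (ℙ {ω | U ω = u ∧ X ω = x ∧ S ω = s ∧ Y ω = y}).toReal
          * (ℙ {ω | X ω = x ∧ S ω = s}).toReal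
        = (ℙ {ω | U ω = u ∧ X ω = x ∧ S ω = s}).toReal
          * (ℙ {ω | Y ω = y ∧ X ω = x ∧ S ω = s}).toReal) :
    shMutualInfo U Y - shMutualInfo U S ≤ shCondMutualInfo X Y S := by
  have hUS := hU.prodMk hS
  have hXS := hX.prodMk hS
  have hUS_Y := shCondMutualInfo_nonneg hU hS hY
  have hXY_US := shCondMutualInfo_nonneg hX hY hUS
  have hUY_XS : shCondMutualInfo U Y (fun ω ↦ (X ω, S ω)) = 0 := by
    refine shCondMutualInfo_eq_zero_of_condIndep hU hY hXS fun u y ⟨x, s⟩ ↦ ?_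
    simp only [Prod.mk.injEq]
    convert hMarkov u x s y using 4
    ext ω
    simp only [Set.mem_ofPred_eq]
    tauto
  have swapSY : shEnt (fun ω ↦ (S ω, Y ω)) = shEnt (fun ω ↦ (Y ω, S ω)) :=
    shEnt_comp_of_injective (hY.prodMk hS) Prod.swap_injective
  have permUSY : shEnt (fun ω ↦ (U ω, S ω, Y ω)) = shEnt (fun ω ↦ (Y ω, U ω, S ω)) :=
    shEnt_comp_of_injective (f := fun p ↦ (p.2.1, p.2.2, p.1)) (hY.prodMk hUS)
      fun _ _ h ↦ by simp_all [Prod.ext_iff]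
  have permXUS : shEnt (fun ω ↦ (X ω, U ω, S ω)) = shEnt (fun ω ↦ (U ω, X ω, S ω)) :=
    shEnt_comp_of_injective (f := fun p ↦ (p.2.1, p.1, p.2.2)) (hU.prodMk hXS)
      fun _ _ h ↦ by simp_all [Prod.ext_iff]
  have permXYUS : shEnt (fun ω ↦ (X ω, Y ω, U ω, S ω)) = shEnt (fun ω ↦ (U ω, Y ω, X ω, S ω)) :=
    shEnt_comp_of_injective (f := fun p ↦ (p.2.2.1, p.2.1, p.1, p.2.2.2))
      (hU.prodMk (hY.prodMk hXS)) fun _ _ h ↦ by simp_all [Prod.ext_iff]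
  have permYXS : shEnt (fun ω ↦ (Y ω, X ω, S ω)) = shEnt (fun ω ↦ (X ω, Y ω, S ω)) :=
    shEnt_comp_of_injective (f := fun p ↦ (p.2.1, p.1, p.2.2)) (hX.prodMk (hY.prodMk hS))
      fun _ _ h ↦ by simp_all [Prod.ext_iff]
  simp only [shMutualInfo, shCondMutualInfo] at hUS_Y hXY_US hUY_XS ⊢
  linarith
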